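/- Let y : [0,∞) → ℝ be nonnegative and differentiable, satisfying y'(t) ≤ -2 y(t) + C₁ e^{-t} √(y(t)) for all t, where C₁ > 0. Then there is a constant C₂ such that √(y(t)) ≤ C₂ e^{-t}(t+1) for all t ≥ 0. (This is the L² decay estimate for m̃ in Lemma 2.7.) -/

import Mathlib

open Real

/-- If `y ≥ 0` is differentiable with `y' ≤ -2y + C₁ e^{-t} √y`, then
`√(y(t)) ≤ C₂ e^{-t}(t+1)` for some constant `C₂`. -/
theorem stmt_10 (y : ℝ → ℝ) (hy : ∀ t ≥ (0:ℝ), DifferentiableAt ℝ y t)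
    (hy0 : ∀ t ≥ (0:ℝ), 0 ≤ y t) (C₁ : ℝ) (hC₁ : 0 < C₁)
    (hd : ∀ t ≥ (0:ℝ),
      deriv y t ≤ -2 * y t + C₁ * Real.exp (-t) * Real.sqrt (y t)) :
    ∃ C₂ : ℝ, ∀ t ≥ (0:ℝ), Real.sqrt (y t) ≤ C₂ * Real.exp (-t) * (t + 1) := by
  set a : ℝ := Real.sqrt (y 0) + 1 with ha
  set K : ℝ := C₁ / 2 + 1 with hK
  have ha0 : 0 < a := by positivity
  have hK0 : 0 < K := by positivity
  set z : ℝ → ℝ := fun t => Real.exp (2 * t) * y t with hz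
  set B : ℝ → ℝ := fun t => (a + K * t) ^ 2 with hB
  set B' : ℝ → ℝ := fun t => 2 * K * (a + K * t) with hB'
  have hBd : ∀ x, HasDerivAt B (B' x) x := by
    intro x
    have h1 : HasDerivAt (fun t : ℝ => a + K * t) K x := by
      simpa using ((hasDerivAt_id x).const_mul K).const_add a
    have := h1.pow 2
    refine this.congr_deriv ?_
    simp [hB']; ring
  set z' : ℝ → ℝ := fun t => Real.exp (2 * t) * (2 * y t + deriv y t) with hz'
  have hzd : ∀ t ≥ (0:ℝ), HasDerivAt z (z' t) t := by
    intro t ht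
    have h1 : HasDerivAt (fun t : ℝ => Real.exp (2 * t)) (2 * Real.exp (2 * t)) t := by
      simpa [mul_comm] using (((hasDerivAt_id t).const_mul 2).exp)
    have h2 : HasDerivAt y (deriv y t) t := (hy t ht).hasDerivAt
    have := h1.mul h2
    refine this.congr_deriv ?_
    simp [hz']; ring
  -- key comparison: z t ≤ B t for t ≥ 0
  have key : ∀ t ≥ (0:ℝ), z t ≤ B t := by
    intro t ht
    have := image_le_of_deriv_right_lt_deriv_boundary (f := z) (f' := z') (a := 0) (b := t)
      (B := B) (B' := B')
      (fun x hx => ((hzd x hx.1).continuousAt).continuousWithinAt)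
      (fun x hx => (hzd x hx.1).hasDerivWithinAt)
      (by
        simp only [hz, hB, mul_zero, Real.exp_zero, one_mul]
        have h := Real.sq_sqrt (hy0 0 le_rfl)
        nlinarith [Real.sqrt_nonneg (y 0)])
      hBd
      (fun x hx hzB => by
        have hx0 : (0:ℝ) ≤ x := hx.1
        have hy0x := hy0 x hx0
        have hsz : Real.sqrt (z x) = Real.exp x * Real.sqrt (y x) := by
          have : z x = Real.exp x ^ 2 * y x := by
            simp only [hz]
            rw [← Real.exp_nat_mul]
            norm_num [mul_comm]
          rw [this, Real.sqrt_mul (by positivity), Real.sqrt_sq (Real.exp_pos x).le]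
        have hsqB : Real.sqrt (B x) = a + K * x := by
          simp only [hB]
          exact Real.sqrt_sq (by positivity)
        have hszB : Real.sqrt (z x) = a + K * x := by rw [hzB] at *; exact hsqB ▸ (by rw [← hzB, hzB, hsqB])
        have hbound : z' x ≤ C₁ * Real.sqrt (z x) := by
          have hdx := hd x hx0
          have : z' x ≤ Real.exp (2 * x) * (C₁ * Real.exp (-x) * Real.sqrt (y x)) := by
            simp only [hz']
            have := Real.exp_pos (2 * x)
            nlinarith
          calc z' x ≤ Real.exp (2 * x) * (C₁ * Real.exp (-x) * Real.sqrt (y x)) := this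
            _ = C₁ * (Real.exp x * Real.sqrt (y x)) := by
                rw [show (2:ℝ) * x = x + x by ring, Real.exp_add]
                rw [show Real.exp x * Real.exp x * (C₁ * Real.exp (-x) * Real.sqrt (y x))
                    = C₁ * (Real.exp x * (Real.exp x * Real.exp (-x)) * Real.sqrt (y x)) by ring,
                  ← Real.exp_add]
                simp
            _ = C₁ * Real.sqrt (z x) := by rw [hsz]
        have hpos : 0 < a + K * x := by positivity
        calc z' x ≤ C₁ * Real.sqrt (z x) := hbound
          _ = C₁ * (a + K * x) := by rw [hszB]
          _ < 2 * K * (a + K * x) := by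
              apply mul_lt_mul_of_pos_right _ hpos
              simp only [hK]; linarith)
      ⟨ht, le_refl t⟩
    exact this
  refine ⟨a + K, fun t ht => ?_⟩
  have hzB := key t ht
  have hsz : Real.sqrt (y t) = Real.exp (-t) * Real.sqrt (z t) := by
    have : z t = Real.exp t ^ 2 * y t := by
      simp only [hz]
      rw [← Real.exp_nat_mul]; norm_num [mul_comm]
    rw [this, Real.sqrt_mul (by positivity), Real.sqrt_sq (Real.exp_pos t).le,
      ← mul_assoc, ← Real.exp_add]
    simp
  rw [hsz]
  have h1 : Real.sqrt (z t) ≤ a + K * t := by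
    have := Real.sqrt_le_sqrt hzB
    rwa [show Real.sqrt (B t) = a + K * t from Real.sqrt_sq (by positivity)] at this
  have h2 : a + K * t ≤ (a + K) * (t + 1) := by nlinarith
  calc Real.exp (-t) * Real.sqrt (z t) ≤ Real.exp (-t) * (a + K * t) := by
        exact mul_le_mul_of_nonneg_left h1 (Real.exp_pos _).le
    _ ≤ Real.exp (-t) * ((a + K) * (t + 1)) := mul_le_mul_of_nonneg_left h2 (Real.exp_pos _).le
    _ = (a + K) * Real.exp (-t) * (t + 1) := by ring
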